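/- Let u ∈ ℝ^d with sorted entries u_(1) ≥ … ≥ u_(d), let 1 ≤ k < d with gap Δ_k = u_(k) − u_(k+1) > 0, let S = S_k(u) be the salient set, let η > 0, and let α be the softmax of ηu with tail mass t = Σ_{i ∉ S} α_i; assume t < 1. Let δ ∈ ℝ^d with 0 ≤ δ_i ≤ B for all i and some B > 0, and define D = Σ_{i=1}^d α_i δ_i and d_S = Σ_{i ∈ S} (α_i/(1 − t)) δ_i. Then |D − d_S| ≤ 2B·((d − k)/k)·exp(−η Δ_k). -/

import Mathlib

open Finset Real

/-!
Split `D = T + A` into the contributions from outside and inside `S`. Since `d_S = A / (1 - t)`,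
`D - d_S = T - t · d_S` is a difference of two numbers in `[0, t B]`, so `|D - d_S| ≤ t B`.
The partition function is at least `k · exp (η u_(k))`, as at least `k` entries reach `u_(k)`, while
every index outside `S` has `u_i ≤ u_(k+1)`; hence each tail weight is at most `exp (-η Δ_k) / k`
and `t ≤ ((d - k) / k) · exp (-η Δ_k)`.
-/

section Renormalization

variable {ι : Type*} [Fintype ι] [DecidableEq ι]

theorem abs_sum_mul_sub_sum_renormalized_le {α δ : ι → ℝ} {S : Finset ι} {t B : ℝ}
    (hα0 : ∀ i, 0 ≤ α i) (hα1 : ∑ i, α i = 1) (ht_def : ∑ i ∈ univ \ S, α i = t) (ht : t < 1)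
    (hδ0 : ∀ i, 0 ≤ δ i) (hδB : ∀ i, δ i ≤ B) :
    |∑ i, α i * δ i - ∑ i ∈ S, α i / (1 - t) * δ i| ≤ t * B := by
  have h1t : 0 < 1 - t := by linarith
  have ht0 : 0 ≤ t := ht_def ▸ sum_nonneg fun i _ => hα0 i
  have hmass : ∑ i ∈ S, α i = 1 - t := by
    rw [← hα1, ← ht_def, ← sum_sdiff (subset_univ S)]
    ring
  have hnonneg (s : Finset ι) : 0 ≤ ∑ i ∈ s, α i * δ i :=
    sum_nonneg fun i _ => mul_nonneg (hα0 i) (hδ0 i)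
  have hbound (s : Finset ι) : ∑ i ∈ s, α i * δ i ≤ (∑ i ∈ s, α i) * B := by
    rw [sum_mul]
    exact sum_le_sum fun i _ => mul_le_mul_of_nonneg_left (hδB i) (hα0 i)
  set A := ∑ i ∈ S, α i * δ i
  have hdS : ∑ i ∈ S, α i / (1 - t) * δ i = A / (1 - t) := by
    rw [sum_div]
    exact sum_congr rfl fun i _ => by ring
  have hdiff : ∑ i, α i * δ i - A / (1 - t) = ∑ i ∈ univ \ S, α i * δ i - t * (A / (1 - t)) := by
    rw [← sum_sdiff (subset_univ S)]
    field_simp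
    ring
  have hAB : A / (1 - t) ≤ B := by
    rw [div_le_iff₀ h1t, mul_comm, ← hmass]
    exact hbound S
  rw [hdS, hdiff]
  exact abs_sub_le_of_nonneg_of_le (hnonneg _) (ht_def ▸ hbound _)
    (mul_nonneg ht0 (div_nonneg (hnonneg S) h1t.le)) (mul_le_mul_of_nonneg_left hAB ht0)

end Renormalization

section Softmax

variable {ι : Type*} [Fintype ι] {u : ι → ℝ} {η a : ℝ}

theorem nat_mul_exp_le_sum_exp (hη : 0 ≤ η) {k : ℕ} (hk : k ≤ #{j | a ≤ u j}) :
    k * exp (η * a) ≤ ∑ j, exp (η * u j) := calc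
  (k : ℝ) * exp (η * a) ≤ #{j | a ≤ u j} • exp (η * a) := by
    rw [nsmul_eq_mul]
    gcongr
  _ ≤ ∑ j ∈ {j | a ≤ u j}, exp (η * u j) :=
    card_nsmul_le_sum _ _ _ fun j hj => exp_le_exp.mpr <|
      mul_le_mul_of_nonneg_left (mem_filter.mp hj).2 hη
  _ ≤ ∑ j, exp (η * u j) := sum_le_univ_sum_of_nonneg fun j => (exp_pos _).le

theorem exp_div_sum_exp_le (hη : 0 ≤ η) {k : ℕ} (hk0 : 0 < k) (hk : k ≤ #{j | a ≤ u j})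
    {b : ℝ} {i : ι} (hi : u i ≤ b) :
    exp (η * u i) / ∑ j, exp (η * u j) ≤ exp (-η * (a - b)) / k := by
  have hZ := nat_mul_exp_le_sum_exp hη hk
  rw [div_le_div_iff₀ (lt_of_lt_of_le (by positivity) hZ) (by positivity)]
  calc exp (η * u i) * k ≤ exp (η * b) * k := by gcongr
    _ = exp (-η * (a - b)) * (k * exp (η * a)) := by
      rw [mul_left_comm, ← exp_add]
      ring_nf
    _ ≤ exp (-η * (a - b)) * ∑ j, exp (η * u j) := by gcongr

theorem sum_softmax_sdiff_le [DecidableEq ι] (hη : 0 ≤ η) {k : ℕ} (hk0 : 0 < k)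
    (hk : k ≤ #{j | a ≤ u j}) {b : ℝ} (hb : ∀ i, u i < a → u i ≤ b) :
    ∑ i ∈ univ \ ({j | a ≤ u j} : Finset ι), exp (η * u i) / ∑ j, exp (η * u j) ≤
      #(univ \ ({j | a ≤ u j} : Finset ι)) / k * exp (-η * (a - b)) := by
  refine (sum_le_card_nsmul _ _ _ fun i hi => exp_div_sum_exp_le hη hk0 hk (hb i ?_)).trans_eq ?_
  · simpa using hi
  · rw [nsmul_eq_mul]
    ring

theorem sum_exp_div_sum_exp [Nonempty ι] (η : ℝ) (u : ι → ℝ) :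
    ∑ i, exp (η * u i) / ∑ j, exp (η * u j) = 1 := by
  rw [← sum_div]
  exact div_self (sum_pos (fun j _ => exp_pos _) univ_nonempty).ne'

end Softmax

theorem cast_card_univ_sdiff_le {ι : Type*} [Fintype ι] [DecidableEq ι] {S : Finset ι} {k : ℕ}
    (hk : k ≤ #S) : (#(univ \ S) : ℝ) ≤ Fintype.card ι - k := by
  rw [card_univ_sdiff, Nat.cast_sub S.card_le_univ]
  gcongr

section Sorted

variable {d : ℕ} {u v : Fin d → ℝ} {e : Equiv.Perm (Fin d)}

theorem succ_le_card_filter_of_sorted (hv : ∀ i, v i = u (e i)) (hsorted : Antitone v)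
    (j : Fin d) : (j : ℕ) + 1 ≤ #{i | v j ≤ u i} := by
  rw [← Fin.card_Iic]
  refine card_le_card_of_injOn e (fun l hl => ?_) e.injective.injOn
  simpa [← hv] using hsorted (mem_Iic.mp hl)

theorem le_succ_of_lt_of_sorted (hv : ∀ i, v i = u (e i)) (hsorted : Antitone v)
    {j m : Fin d} (hjm : (j : ℕ) + 1 = m) {i : Fin d} (hi : u i < v j) : u i ≤ v m := by
  rw [← e.apply_symm_apply i, ← hv] at hi ⊢
  have hj : j < e.symm i := by
    by_contra! h
    exact (hsorted h).not_gt hi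
  exact hsorted (by omega)

end Sorted

/-- Let `u ∈ ℝ^d` with decreasingly sorted entries given by
`v` (a rearrangement of `u` along a permutation `e`), `1 ≤ k < d` with gap
`Δ_k = u_(k) − u_(k+1) > 0`, `S = S_k(u)` the salient set, `η > 0`, `α` the
softmax of `ηu` with tail mass `t = ∑_{i ∉ S} α_i < 1`, and `0 ≤ δ_i ≤ B` with
`B > 0`. With `D = ∑ i, α_i δ_i` and `d_S = ∑_{i ∈ S} (α_i/(1−t)) δ_i`,
`|D − d_S| ≤ 2B·((d−k)/k)·exp(−η Δ_k)`. -/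
theorem dcd_relaxation_rate (d k : ℕ) (hk1 : 1 ≤ k) (hkd : k < d)
    (u v : Fin d → ℝ) (e : Equiv.Perm (Fin d))
    (hv : ∀ i, v i = u (e i))
    (hsorted : ∀ i j : Fin d, i ≤ j → v j ≤ v i)
    (η : ℝ) (hη : 0 < η)
    (α : Fin d → ℝ)
    (hα : ∀ i, α i = Real.exp (η * u i) / ∑ j, Real.exp (η * u j))
    (ht : ∑ i ∈ Finset.univ \
        Finset.univ.filter (fun i => v ⟨k - 1, by omega⟩ ≤ u i), α i < 1)
    (δ : Fin d → ℝ) (B : ℝ) (hB : 0 < B)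
    (hδ0 : ∀ i, 0 ≤ δ i) (hδB : ∀ i, δ i ≤ B) :
    |(∑ i, α i * δ i) -
        ∑ i ∈ Finset.univ.filter (fun i => v ⟨k - 1, by omega⟩ ≤ u i),
          (α i / (1 - ∑ i ∈ Finset.univ \
            Finset.univ.filter (fun i => v ⟨k - 1, by omega⟩ ≤ u i), α i)) * δ i| ≤
      2 * B * (((d : ℝ) - k) / k) *
        Real.exp (-η * (v ⟨k - 1, by omega⟩ - v ⟨k, hkd⟩)) := by
  set a := v ⟨k - 1, by omega⟩
  set S : Finset (Fin d) := {i | a ≤ u i}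
  set E := exp (-η * (a - v ⟨k, hkd⟩))
  have hkS : k ≤ #S := by
    simpa [Nat.sub_add_cancel hk1] using succ_le_card_filter_of_sorted hv hsorted ⟨k - 1, by omega⟩
  have htail : ∑ i ∈ univ \ S, α i ≤ (d - k) / k * E := calc
    _ = ∑ i ∈ univ \ S, exp (η * u i) / ∑ j, exp (η * u j) := sum_congr rfl fun i _ => hα i
    _ ≤ #(univ \ S) / k * E := sum_softmax_sdiff_le hη.le hk1 hkS fun i =>
      le_succ_of_lt_of_sorted hv hsorted (m := ⟨k, hkd⟩) (Nat.sub_add_cancel hk1)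
    _ ≤ (d - k) / k * E := by
      gcongr
      simpa using cast_card_univ_sdiff_le hkS
  have hα1 : ∑ i, α i = 1 := by
    have : Nonempty (Fin d) := ⟨⟨0, by omega⟩⟩
    simpa only [← hα] using sum_exp_div_sum_exp η u
  have hα0 (i : Fin d) : 0 ≤ α i := hα i ▸ by positivity
  have hcE : 0 ≤ (d - k) / k * E := (sum_nonneg fun i _ => hα0 i).trans htail
  calc _ ≤ (∑ i ∈ univ \ S, α i) * B :=
        abs_sum_mul_sub_sum_renormalized_le hα0 hα1 rfl ht hδ0 hδB
    _ ≤ (d - k) / k * E * B := mul_le_mul_of_nonneg_right htail hB.le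
    _ ≤ _ := by linarith [mul_nonneg hcE hB.le]
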